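/- There exist constants C₁ > 0 and c₀ > 0 such that for all n ≥ 1, P(Z_n ≤ n) ≤ C₁ exp(−c₀ n). (Lemma 6.2.) -/

import Mathlib

/-!
Since `p₀ = 0` every individual has at least one child, and at least two with probability
`q = P(X ≥ 2) > 0` (otherwise `m = 1`). So the offspring generating function `f` is dominated on
`[0, 1]` by `φ t = (1 - q) t + q t²`, and the branching identity `E t^Z(n+1) = E f(t)^Z(n)` gives
`E t^Z(n) ≤ φⁿ(t)`. The iterates `φⁿ(t)` decrease to the fixed point `0`, and once below `1/2`
they contract by the factor `1 - q/2`; hence `E s^Z(n) ≤ C (1 - q/2)ⁿ` for `s = 1 - q/4`, and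
Markov's inequality `sⁿ P(Z n ≤ n) ≤ E s^Z(n)` yields decay at the rate `(1 - q/2)/(1 - q/4) < 1`.
-/

open MeasureTheory ProbabilityTheory Filter Topology Set Function

theorem ProbabilityTheory.IndepFun.integral_comp_eq_integral_integral
    {Ω β γ : Type*} {mΩ : MeasurableSpace Ω} {mβ : MeasurableSpace β} {mγ : MeasurableSpace γ}
    {P : Measure Ω} [IsFiniteMeasure P] {Y : Ω → β} {V : Ω → γ}
    (hYV : IndepFun Y V P) (hY : Measurable Y) (hV : Measurable V)
    {G : β → γ → ℝ} (hG : StronglyMeasurable (uncurry G)) {C : ℝ} (hGC : ∀ b c, ‖G b c‖ ≤ C) :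
    ∫ ω, G (Y ω) (V ω) ∂P = ∫ ω, ∫ ω', G (Y ω) (V ω') ∂P ∂P := by
  have hint : Integrable (uncurry G) ((P.map Y).prod (P.map V)) :=
    Integrable.of_bound hG.aestronglyMeasurable C (Eventually.of_forall fun p => hGC p.1 p.2)
  calc ∫ ω, G (Y ω) (V ω) ∂P = ∫ p, uncurry G p ∂(P.map fun ω => (Y ω, V ω)) :=
        (integral_map (hY.prodMk hV).aemeasurable hG.aestronglyMeasurable).symm
    _ = ∫ b, ∫ c, G b c ∂(P.map V) ∂(P.map Y) := by
        rw [(indepFun_iff_map_prod_eq_prod_map_map hY.aemeasurable hV.aemeasurable).1 hYV]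
        exact integral_prod _ hint
    _ = ∫ ω, ∫ ω', G (Y ω) (V ω') ∂P ∂P := by
        rw [integral_map hY.aemeasurable
          (hG.integral_prod_right (ν := P.map V)).aestronglyMeasurable]
        refine integral_congr_ae (Eventually.of_forall fun ω => ?_)
        exact integral_map hV.aemeasurable
          (hG.comp_measurable measurable_prodMk_left).aestronglyMeasurable

/-- The generating function of the offspring law `p₁ = 1 - q`, `p₂ = q`. -/
noncomputable def twoPointPGF (q t : ℝ) : ℝ := (1 - q) * t + q * t ^ 2

section TwoPointPGF

variable {q t : ℝ}

lemma twoPointPGF_le_self (hq0 : 0 ≤ q) (ht : t ∈ Icc (0 : ℝ) 1) : twoPointPGF q t ≤ t := by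
  unfold twoPointPGF; nlinarith [mul_nonneg (mul_nonneg hq0 ht.1) (sub_nonneg.2 ht.2)]

lemma twoPointPGF_mem_Icc (hq : q ∈ Icc (0 : ℝ) 1) (ht : t ∈ Icc (0 : ℝ) 1) :
    twoPointPGF q t ∈ Icc (0 : ℝ) 1 :=
  ⟨add_nonneg (mul_nonneg (sub_nonneg.2 hq.2) ht.1) (mul_nonneg hq.1 (sq_nonneg t)),
    (twoPointPGF_le_self hq.1 ht).trans ht.2⟩

lemma twoPointPGF_le_mul_self (hq0 : 0 ≤ q) (ht0 : 0 ≤ t) (ht : t ≤ 1 / 2) :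
    twoPointPGF q t ≤ (1 - q / 2) * t := by
  unfold twoPointPGF; nlinarith [mul_nonneg (mul_nonneg hq0 ht0) (sub_nonneg.2 ht)]

lemma iterate_twoPointPGF_mem_Icc (hq : q ∈ Icc (0 : ℝ) 1) (ht : t ∈ Icc (0 : ℝ) 1) (n : ℕ) :
    (twoPointPGF q)^[n] t ∈ Icc (0 : ℝ) 1 :=
  MapsTo.iterate (fun _ => twoPointPGF_mem_Icc hq) n ht

lemma tendsto_iterate_twoPointPGF (hq : q ∈ Ioc (0 : ℝ) 1) (ht : t ∈ Ico (0 : ℝ) 1) :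
    Tendsto (fun n => (twoPointPGF q)^[n] t) atTop (𝓝 0) := by
  set s := fun n => (twoPointPGF q)^[n] t
  have hs := iterate_twoPointPGF_mem_Icc (Ioc_subset_Icc_self hq) (Ico_subset_Icc_self ht)
  have hbdd : BddBelow (range s) := ⟨0, forall_mem_range.2 fun n => (hs n).1⟩
  have hanti : Antitone s := antitone_nat_of_succ_le fun n => by
    simp only [s, iterate_succ_apply']; exact twoPointPGF_le_self hq.1.le (hs n)
  have hlim := tendsto_atTop_ciInf hanti hbdd
  have hfix := isFixedPt_of_tendsto_iterate hlim (by unfold twoPointPGF; fun_prop)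
  have hL1 : ⨅ n, s n < 1 := (ciInf_le hbdd 0).trans_lt ht.2
  convert hlim
  -- the fixed points of `twoPointPGF q` are `0` and `1`
  have : q * (⨅ n, s n) * (1 - ⨅ n, s n) = 0 := by
    unfold IsFixedPt twoPointPGF at hfix; linear_combination -hfix
  rcases mul_eq_zero.1 this with h | h
  · exact ((mul_eq_zero.1 h).resolve_left hq.1.ne').symm
  · linarith

lemma exists_iterate_twoPointPGF_le (hq : q ∈ Ioc (0 : ℝ) 1) (ht : t ∈ Ico (0 : ℝ) 1) :
    ∃ C > 0, ∀ n, (twoPointPGF q)^[n] t ≤ C * (1 - q / 2) ^ n := by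
  set s := fun n => (twoPointPGF q)^[n] t
  set γ := 1 - q / 2
  have hγ0 : 0 < γ := by simp only [γ]; linarith [hq.2]
  have hγ1 : γ ≤ 1 := by simp only [γ]; linarith [hq.1]
  have hs := iterate_twoPointPGF_mem_Icc (Ioc_subset_Icc_self hq) (Ico_subset_Icc_self ht)
  obtain ⟨K, hK⟩ := ((tendsto_iterate_twoPointPGF hq ht).eventually
    (gt_mem_nhds one_half_pos)).exists_forall_of_atTop
  have htail : ∀ j, s (j + K) ≤ γ ^ j := by
    intro j
    induction j with
    | zero => simpa using (hs K).2
    | succ j ih =>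
      calc s (j + 1 + K) = twoPointPGF q (s (j + K)) := by
            simp only [s, add_right_comm j 1 K, iterate_succ_apply']
        _ ≤ γ * s (j + K) := twoPointPGF_le_mul_self hq.1.le (hs _).1 (hK _ le_add_self).le
        _ ≤ γ ^ (j + 1) := by rw [pow_succ']; exact mul_le_mul_of_nonneg_left ih hγ0.le
  refine ⟨(γ ^ K)⁻¹, by positivity, fun n => ?_⟩
  have hsn : s n ≤ γ ^ (n - K) := by
    rcases le_or_gt K n with h | h
    · simpa [Nat.sub_add_cancel h] using htail (n - K)
    · simpa [Nat.sub_eq_zero_of_le h.le] using (hs n).2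
  calc s n ≤ γ ^ (n - K) := hsn
    _ ≤ (γ ^ K)⁻¹ * γ ^ n := by
      rw [inv_mul_eq_div, le_div_iff₀ (pow_pos hγ0 K), ← pow_add]
      exact pow_le_pow_of_le_one hγ0.le hγ1 (by omega)

lemma exists_iterate_twoPointPGF_le_mul_pow (hq : q ∈ Ioc (0 : ℝ) 1) :
    ∃ s ∈ Ioo (0 : ℝ) 1, ∃ C > 0, ∃ ρ ∈ Ioo (0 : ℝ) 1,
      ∀ n, (twoPointPGF q)^[n] s ≤ C * (ρ * s) ^ n := by
  have hγ : 0 < 1 - q / 2 := by linarith [hq.2]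
  have hs : 1 - q / 2 < 1 - q / 4 := by linarith [hq.1]
  have hs0 : 0 < 1 - q / 4 := hγ.trans hs
  obtain ⟨C, hC, hiter⟩ := exists_iterate_twoPointPGF_le hq ⟨hs0.le, by linarith [hq.1]⟩
  refine ⟨1 - q / 4, ⟨hs0, by linarith [hq.1]⟩, C, hC, (1 - q / 2) / (1 - q / 4),
    ⟨div_pos hγ hs0, (div_lt_one hs0).2 hs⟩, fun n => ?_⟩
  rw [div_mul_cancel₀ _ hs0.ne']
  exact hiter n

end TwoPointPGF

noncomputable def probGenFun {Ω : Type*} [MeasurableSpace Ω] (P : Measure Ω) (Y : Ω → ℕ)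
    (t : ℝ) : ℝ :=
  ∫ ω, t ^ Y ω ∂P

section ProbGenFun

variable {Ω : Type*} [MeasurableSpace Ω] {P : Measure Ω} {Y : Ω → ℕ} {t : ℝ}

lemma integral_prod_pow_of_iIndepFun {ι : Type*} {Xs : ι → Ω → ℕ} (hind : iIndepFun Xs P)
    (hmeas : ∀ i, Measurable (Xs i)) (hident : ∀ i, IdentDistrib (Xs i) Y P P) (s : Finset ι) :
    ∫ ω, ∏ i ∈ s, t ^ Xs i ω ∂P = probGenFun P Y t ^ s.card := by
  have hind_s : iIndepFun (fun i : s => Xs i) P := hind.precomp Subtype.val_injective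
  simp_rw [← Finset.prod_coe_sort s]
  rw [hind_s.integral_fun_prod_comp (f := fun _ k => t ^ k) (fun i => (hmeas i).aemeasurable)
    (fun _ => measurable_from_nat.aestronglyMeasurable)]
  have hgen : ∀ i, ∫ ω, t ^ Xs i ω ∂P = probGenFun P Y t := fun i =>
    ((hident i).comp (measurable_from_nat (f := fun k : ℕ => t ^ k))).integral_eq
  simp [hgen]

variable [IsProbabilityMeasure P]

lemma integrable_pow_of_mem_Icc (hY : Measurable Y) (ht : t ∈ Icc (0 : ℝ) 1) :
    Integrable (fun ω => t ^ Y ω) P :=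
  .of_bound (measurable_from_nat.comp hY).aestronglyMeasurable 1 <| .of_forall fun ω => by
    rw [Real.norm_of_nonneg (pow_nonneg ht.1 _)]; exact pow_le_one₀ ht.1 ht.2

lemma probGenFun_mem_Icc (ht : t ∈ Icc (0 : ℝ) 1) : probGenFun P Y t ∈ Icc (0 : ℝ) 1 := by
  refine ⟨integral_nonneg fun ω => pow_nonneg ht.1 _, ?_⟩
  calc probGenFun P Y t ≤ ∫ _, (1 : ℝ) ∂P :=
        integral_mono_of_nonneg (.of_forall fun ω => pow_nonneg ht.1 _) (integrable_const 1)
          (.of_forall fun ω => pow_le_one₀ ht.1 ht.2)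
    _ = 1 := by simp

lemma probGenFun_monotoneOn (hY : Measurable Y) : MonotoneOn (probGenFun P Y) (Icc 0 1) :=
  fun _ hs _ ht hst => integral_mono (integrable_pow_of_mem_Icc hY hs)
    (integrable_pow_of_mem_Icc hY ht) fun _ => pow_le_pow_left₀ hs.1 hst _

lemma probGenFun_le_twoPointPGF (hY : Measurable Y) (hY1 : ∀ᵐ ω ∂P, 1 ≤ Y ω)
    (ht : t ∈ Icc (0 : ℝ) 1) : probGenFun P Y t ≤ twoPointPGF (P.real {ω | 2 ≤ Y ω}) t := by
  have hA : MeasurableSet {ω | 2 ≤ Y ω} := measurableSet_le measurable_const hY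
  calc probGenFun P Y t ≤ ∫ ω, (t + {ω | 2 ≤ Y ω}.indicator (fun _ => t ^ 2 - t) ω) ∂P := by
        refine integral_mono_ae (integrable_pow_of_mem_Icc hY ht)
          ((integrable_const t).add ((integrable_const _).indicator hA)) ?_
        filter_upwards [hY1] with ω hω
        by_cases h2 : 2 ≤ Y ω
        · simpa [h2] using pow_le_pow_of_le_one ht.1 ht.2 h2
        · simp [show Y ω = 1 by omega]
    _ = twoPointPGF (P.real {ω | 2 ≤ Y ω}) t := by
        rw [integral_add (integrable_const t) ((integrable_const _).indicator hA),
          integral_indicator_const _ hA]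
        simp only [integral_const, smul_eq_mul, probReal_univ, twoPointPGF]
        ring

lemma measureReal_two_le_pos (hY1 : ∀ᵐ ω ∂P, 1 ≤ Y ω) (hY : 1 < ∫ ω, (Y ω : ℝ) ∂P) :
    0 < P.real {ω | 2 ≤ Y ω} := by
  refine measureReal_nonneg.lt_of_ne fun h => hY.ne ?_
  have hY_eq : ∀ᵐ ω ∂P, (Y ω : ℝ) = 1 := by
    filter_upwards [hY1, measure_eq_zero_iff_ae_notMem.1 ((measureReal_eq_zero_iff).1 h.symm)]
      with ω h1 h2
    simp only [not_le] at h2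
    exact_mod_cast (show Y ω = 1 by omega)
  simp [integral_congr_ae hY_eq]

lemma pow_mul_measureReal_le_le_probGenFun (hY : Measurable Y) (ht : t ∈ Ioc (0 : ℝ) 1) (n : ℕ) :
    t ^ n * P.real {ω | Y ω ≤ n} ≤ probGenFun P Y t :=
  calc t ^ n * P.real {ω | Y ω ≤ n} ≤ t ^ n * P.real {ω | t ^ n ≤ t ^ Y ω} :=
        mul_le_mul_of_nonneg_left (measureReal_mono fun ω h => pow_le_pow_of_le_one ht.1.le ht.2 h)
          (pow_nonneg ht.1.le n)
    _ ≤ probGenFun P Y t :=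
        mul_meas_ge_le_integral_of_nonneg (.of_forall fun ω => pow_nonneg ht.1.le _)
          (integrable_pow_of_mem_Icc hY (Ioc_subset_Icc_self ht)) _

lemma probGenFun_sum_range_of_indepFun {Xs : ℕ → Ω → ℕ} {N : Ω → ℕ}
    (hind : iIndepFun Xs P) (hmeas : ∀ i, Measurable (Xs i))
    (hident : ∀ i, IdentDistrib (Xs i) Y P P) (hN : Measurable N)
    (hNX : IndepFun N (fun ω i => Xs i ω) P) (ht : t ∈ Icc (0 : ℝ) 1) :
    probGenFun P (fun ω => ∑ i ∈ Finset.range (N ω), Xs i ω) t =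
      probGenFun P N (probGenFun P Y t) := by
  have hG : StronglyMeasurable
      (uncurry fun (z : ℕ) (v : ℕ → ℕ) => ∏ i ∈ Finset.range z, t ^ v i) :=
    (measurable_from_prod_countable_right fun z => Finset.measurable_fun_prod
      (f := fun i (v : ℕ → ℕ) => t ^ v i) (Finset.range z) fun i _ =>
        measurable_from_nat.comp (measurable_pi_apply i)).stronglyMeasurable
  have hG1 (z : ℕ) (v : ℕ → ℕ) : ‖∏ i ∈ Finset.range z, t ^ v i‖ ≤ 1 := by
    rw [Real.norm_of_nonneg (Finset.prod_nonneg fun i _ => pow_nonneg ht.1 _)]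
    exact Finset.prod_le_one (fun i _ => pow_nonneg ht.1 _) fun i _ => pow_le_one₀ ht.1 ht.2
  simp only [probGenFun, ← Finset.prod_pow_eq_pow_sum]
  rw [hNX.integral_comp_eq_integral_integral hN (measurable_pi_lambda _ hmeas) hG hG1]
  simp only [integral_prod_pow_of_iIndepFun hind hmeas hident, Finset.card_range, probGenFun]

end ProbGenFun

section GaltonWatson

variable {Ω : Type*} [MeasurableSpace Ω] {P : Measure Ω} [IsProbabilityMeasure P]
  {X : ℕ → ℕ → Ω → ℕ} {Z : ℕ → Ω → ℕ}

lemma measurable_galtonWatson (hZ0 : ∀ ω, Z 0 ω = 1)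
    (hZrec : ∀ n ω, Z (n + 1) ω = ∑ i ∈ Finset.range (Z n ω), X n i ω)
    (hXmeas : ∀ n i, Measurable (X n i)) (n : ℕ) : Measurable (Z n) := by
  induction n with
  | zero => rw [funext hZ0]; exact measurable_const
  | succ n ih =>
    rw [funext (hZrec n)]
    exact (measurable_from_prod_countable_right
      (f := fun p : ℕ × Ω => ∑ i ∈ Finset.range p.1, X n i p.2)
      fun z => Finset.measurable_sum (Finset.range z) fun i _ => hXmeas n i).comp
        (ih.prodMk measurable_id)

lemma probGenFun_galtonWatson_le_iterate (hZ0 : ∀ ω, Z 0 ω = 1)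
    (hZrec : ∀ n ω, Z (n + 1) ω = ∑ i ∈ Finset.range (Z n ω), X n i ω)
    (hXmeas : ∀ n i, Measurable (X n i)) (hindep : iIndepFun (fun p : ℕ × ℕ => X p.1 p.2) P)
    (hident : ∀ n i, IdentDistrib (X n i) (X 0 0) P P)
    (hZX : ∀ n, IndepFun (Z n) (fun ω i => X n i ω) P) (hX1 : ∀ᵐ ω ∂P, 1 ≤ X 0 0 ω)
    (n : ℕ) {t : ℝ} (ht : t ∈ Icc (0 : ℝ) 1) :
    probGenFun P (Z n) t ≤ (twoPointPGF (P.real {ω | 2 ≤ X 0 0 ω}))^[n] t := by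
  set q := P.real {ω | 2 ≤ X 0 0 ω}
  induction n generalizing t with
  | zero => simp [probGenFun, hZ0]
  | succ n ih =>
    have hZn := measurable_galtonWatson hZ0 hZrec hXmeas n
    have hrow : iIndepFun (X n) P := hindep.precomp (g := Prod.mk n) (Prod.mk_right_injective n)
    have hq : q ∈ Icc (0 : ℝ) 1 := ⟨measureReal_nonneg, measureReal_le_one⟩
    calc probGenFun P (Z (n + 1)) t = probGenFun P (Z n) (probGenFun P (X 0 0) t) := by
          rw [funext (hZrec n)]
          exact probGenFun_sum_range_of_indepFun hrow (hXmeas n) (hident n) hZn (hZX n) ht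
      _ ≤ probGenFun P (Z n) (twoPointPGF q t) :=
          probGenFun_monotoneOn hZn (probGenFun_mem_Icc ht) (twoPointPGF_mem_Icc hq ht)
            (probGenFun_le_twoPointPGF (hXmeas 0 0) hX1 ht)
      _ ≤ (twoPointPGF q)^[n] (twoPointPGF q t) := ih (twoPointPGF_mem_Icc hq ht)
      _ = (twoPointPGF q)^[n + 1] t := (iterate_succ_apply _ n t).symm

end GaltonWatson

theorem gw_lower_deviation_bound_general
    {Ω : Type*} [MeasurableSpace Ω] (P : Measure Ω) [IsProbabilityMeasure P]
    (X : ℕ → ℕ → Ω → ℕ) (Z : ℕ → Ω → ℕ)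
    (hZ0 : ∀ ω, Z 0 ω = 1)
    (hZrec : ∀ n ω, Z (n + 1) ω = ∑ i ∈ Finset.range (Z n ω), X n i ω)
    (hXmeas : ∀ n i, Measurable (X n i))
    (hindep : iIndepFun (fun p : ℕ × ℕ => X p.1 p.2) P)
    (hident : ∀ n i, IdentDistrib (X n i) (X 0 0) P P)
    (hZX : ∀ n, IndepFun (Z n) (fun ω i => X n i ω) P)
    (m : ℝ) (hm : m = ∫ ω, (Z 1 ω : ℝ) ∂P) (hm1 : 1 < m)
    (hp0 : P {ω | X 0 0 ω = 0} = 0) :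
    ∃ C₁ > (0 : ℝ), ∃ c₀ > (0 : ℝ), ∀ n : ℕ, 1 ≤ n →
      (P {ω | Z n ω ≤ n}).toReal ≤ C₁ * Real.exp (-c₀ * n) := by
  have hZ1 : Z 1 = X 0 0 := funext fun ω => by simp [hZrec 0 ω, hZ0 ω]
  have hX1 : ∀ᵐ ω ∂P, 1 ≤ X 0 0 ω := by
    filter_upwards [measure_eq_zero_iff_ae_notMem.1 hp0] with ω hω
    exact Nat.one_le_iff_ne_zero.2 hω
  set q := P.real {ω | 2 ≤ X 0 0 ω}
  have hq : q ∈ Ioc (0 : ℝ) 1 :=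
    ⟨measureReal_two_le_pos hX1 (by rwa [hm, hZ1] at hm1), measureReal_le_one⟩
  obtain ⟨s, hs, C, hC, ρ, hρ, hiter⟩ := exists_iterate_twoPointPGF_le_mul_pow hq
  refine ⟨C, hC, -Real.log ρ, neg_pos.2 (Real.log_neg hρ.1 hρ.2), fun n _ => ?_⟩
  have hbound : s ^ n * P.real {ω | Z n ω ≤ n} ≤ s ^ n * (C * ρ ^ n) :=
    calc s ^ n * P.real {ω | Z n ω ≤ n} ≤ probGenFun P (Z n) s :=
          pow_mul_measureReal_le_le_probGenFun (measurable_galtonWatson hZ0 hZrec hXmeas n)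
            ⟨hs.1, hs.2.le⟩ n
      _ ≤ (twoPointPGF q)^[n] s := probGenFun_galtonWatson_le_iterate hZ0 hZrec hXmeas hindep
          hident hZX hX1 n ⟨hs.1.le, hs.2.le⟩
      _ ≤ C * (ρ * s) ^ n := hiter n
      _ = s ^ n * (C * ρ ^ n) := by ring
  rw [neg_neg, mul_comm (Real.log ρ), Real.exp_nat_mul, Real.exp_log hρ.1, ← measureReal_def]
  exact le_of_mul_le_mul_left hbound (pow_pos hs.1 n)

/-- Lemma 6.2: exponential bound for `P(Z_n ≤ n)` for a supercritical Galton–Watson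
process with `p_0 = 0`. -/
theorem gw_lower_deviation_bound
    {Ω : Type*} [MeasurableSpace Ω] (P : Measure Ω) [IsProbabilityMeasure P]
    (X : ℕ → ℕ → Ω → ℕ) (Z : ℕ → Ω → ℕ)
    (hZ0 : ∀ ω, Z 0 ω = 1)
    (hZrec : ∀ n ω, Z (n + 1) ω = ∑ i ∈ Finset.range (Z n ω), X n i ω)
    (hXmeas : ∀ n i, Measurable (X n i))
    (hindep : iIndepFun (fun p : ℕ × ℕ => X p.1 p.2) P)
    (hident : ∀ n i, IdentDistrib (X n i) (X 0 0) P P)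
    (hZX : ∀ n, IndepFun (Z n) (fun ω i => X n i ω) P)
    (m : ℝ) (hm : m = ∫ ω, (Z 1 ω : ℝ) ∂P) (hm1 : 1 < m)
    (hmInt : Integrable (fun ω => (Z 1 ω : ℝ)) P)
    (hp0 : P {ω | X 0 0 ω = 0} = 0) :
    ∃ C₁ > (0 : ℝ), ∃ c₀ > (0 : ℝ), ∀ n : ℕ, 1 ≤ n →
      (P {ω | Z n ω ≤ n}).toReal ≤ C₁ * Real.exp (-c₀ * n) :=
  gw_lower_deviation_bound_general P X Z hZ0 hZrec hXmeas hindep hident hZX m hm hm1 hp0
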